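/- The evaluation map from finitely supported {−1,0,1}-sequences to ℂ given by (α_j) ↦ Σ_j α_j z^j, where z = (1+√−11)/2, is injective. -/

import Mathlib

/-!
`z = (1 + √-11) / 2` is a root of `X² - X + 3`; being non-real, it is a root of no nonzero
integer polynomial of degree `≤ 1`, so every integer polynomial `P` with `P(z) = 0` is a multiple
of `X² - X + 3` and `3 ∣ P(0)`. If two digit sequences have the same value, their difference `P`
has coefficients in `[-2, 2]` and `P(z) = 0`, hence `P(0) = 0`. As `z ≠ 0`, also `(P / X)(z) = 0`,
and repeating the argument shows `P = 0`.
-/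

open Polynomial

namespace Polynomial

variable {R A : Type*} [CommRing R] [CommRing A] [Algebra R A]

theorem aeval_ofFinsupp_ofCoeff (γ : ℕ →₀ R) (z : A) :
    aeval z (ofFinsupp (AddMonoidAlgebra.ofCoeff γ)) =
      γ.sum fun j a => algebraMap R A a * z ^ j := by
  rw [aeval_def, eval₂_eq_sum]
  rfl

theorem eq_zero_of_aeval_eq_zero_of_coeff_mem [IsDomain A] {z : A} (hz : z ≠ 0) {D : Set R}
    (hcoeff : ∀ P : R[X], (∀ n, P.coeff n ∈ D) → aeval z P = 0 → P.coeff 0 = 0)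
    (P : R[X]) (hD : ∀ n, P.coeff n ∈ D) (hP : aeval z P = 0) : P = 0 := by
  by_contra hP0
  have hX : P = X * P.divX := by simpa [hcoeff P hD hP] using (X_mul_divX_add P).symm
  have hdivX : aeval z P.divX = 0 := by
    rw [hX, map_mul, aeval_X] at hP
    exact (mul_eq_zero.mp hP).resolve_left hz
  have hdivX0 := eq_zero_of_aeval_eq_zero_of_coeff_mem hz hcoeff P.divX
    (fun n => by simpa using hD (n + 1)) hdivX
  exact hP0 (by rw [hX, hdivX0, mul_zero])
termination_by P.degree
decreasing_by exact degree_divX_lt hP0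

theorem eq_zero_of_natDegree_le_one_of_aeval_eq_zero {z : ℂ} (hz : z.im ≠ 0) {r : ℤ[X]}
    (hr : r.natDegree ≤ 1) (h : aeval z r = 0) : r = 0 := by
  rw [eq_X_add_C_of_natDegree_le_one hr] at h ⊢
  simp only [map_add, map_mul, aeval_X, eq_intCast] at h
  have h₁ : r.coeff 1 = 0 := by simpa [hz] using congrArg Complex.im h
  have h₀ : r.coeff 0 = 0 := by simpa [h₁] using h
  simp [h₀, h₁]

theorem dvd_of_aeval_eq_zero {z : ℂ} (hz : z.im ≠ 0) {q : ℤ[X]} (hq : q.Monic)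
    (hdeg : q.natDegree = 2) (hqz : aeval z q = 0) {P : ℤ[X]} (hP : aeval z P = 0) : q ∣ P := by
  rw [← modByMonic_eq_zero_iff_dvd hq]
  apply eq_zero_of_natDegree_le_one_of_aeval_eq_zero hz
  · have := natDegree_modByMonic_lt P hq (by rintro rfl; simp at hdeg)
    omega
  · rw [aeval_modByMonic_eq_self_of_root hqz, hP]

end Polynomial

namespace Complex

local notation "ω" => (1 + I * Real.sqrt 11) / 2

theorem half_one_add_sqrt_neg_eleven_ne_zero : ω ≠ 0 := fun h => by
  simpa using congrArg im h

theorem aeval_half_one_add_sqrt_neg_eleven : aeval ω (X ^ 2 - X + 3 : ℤ[X]) = 0 := by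
  have h11 : ((Real.sqrt 11 : ℝ) : ℂ) ^ 2 = 11 := by norm_cast; simp
  simp only [map_add, map_sub, map_pow, aeval_X, map_ofNat]
  linear_combination ((Real.sqrt 11 : ℂ) ^ 2 / 4) * I_sq - (1 / 4 : ℂ) * h11

theorem coeff_zero_eq_zero_of_aeval_half_one_add_sqrt_neg_eleven {P : ℤ[X]}
    (hP : aeval ω P = 0) (hP₀ : P.coeff 0 ∈ Set.Icc (-2) 2) : P.coeff 0 = 0 := by
  have h3 : 3 ∣ P.coeff 0 := by
    obtain ⟨S, rfl⟩ := dvd_of_aeval_eq_zero (by simp) (by monicity!) (by compute_degree!)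
      aeval_half_one_add_sqrt_neg_eleven hP
    simp [mul_coeff_zero]
  rw [Set.mem_Icc] at hP₀
  omega

end Complex

open Complex in
/-- The evaluation at `z = (1+√-11)/2 ∈ ℂ` of finitely supported
`{-1,0,1}`-digit sequences, `(α_j) ↦ Σ_j α_j z^j`, is injective. -/
theorem eval_at_half_one_add_sqrt_neg_eleven_injective
    (α β : ℕ →₀ ℤ)
    (hα : ∀ j, α j = -1 ∨ α j = 0 ∨ α j = 1)
    (hβ : ∀ j, β j = -1 ∨ β j = 0 ∨ β j = 1)
    (h : (α.sum fun j a => (a : ℂ) * ((1 + Complex.I * Real.sqrt 11) / 2) ^ j) =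
         (β.sum fun j a => (a : ℂ) * ((1 + Complex.I * Real.sqrt 11) / 2) ^ j)) :
    α = β := by
  set P : ℤ[X] := ofFinsupp (AddMonoidAlgebra.ofCoeff (α - β)) with hPdef
  have hP : aeval ((1 + I * Real.sqrt 11) / 2) P = 0 := by
    rw [aeval_ofFinsupp_ofCoeff, Finsupp.sum_sub_index (by intros; simp [sub_mul])]
    simpa [sub_eq_zero] using h
  have hdigits : ∀ n, P.coeff n ∈ Set.Icc (-2) 2 := fun n => by
    have hPn : P.coeff n = α n - β n := rfl
    have := hα n
    have := hβ n
    rw [hPn, Set.mem_Icc]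
    omega
  have hP0 : P = 0 :=
    eq_zero_of_aeval_eq_zero_of_coeff_mem half_one_add_sqrt_neg_eleven_ne_zero
      (fun Q hQ hQz => coeff_zero_eq_zero_of_aeval_half_one_add_sqrt_neg_eleven hQz (hQ 0))
      P hdigits hP
  simpa [hPdef, sub_eq_zero] using hP0
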